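/- arXiv:1806.02783 — 11 statements merged into one kernel-verified Lean document; each statement's English description precedes it below -/
import Mathlib

section
/- For the cycle graph C_n (n ≥ 3) with the strict majority threshold τ(v) = ⌈(deg(v)+1)/2⌉ = 2 for every vertex, the minimum size of a weak dynamic monopoly equals ⌈n/2⌉. -/
/-! Every vertex of `C_n` has degree `2 = τ`, so a vertex activated in some round `i ≥ 1` needs
*all* its neighbours in round `i - 1`; hence no two adjacent vertices lie outside a weak dynamic
monopoly `D`, i.e. its complement is independent. Shifting an independent set of `C_n` by one maps
it into its complement, so it has at most `n / 2` vertices and `|D| ≥ ⌈n/2⌉`. Conversely, for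
`n ≥ 3` the even vertices activate every odd vertex in a single round: both neighbours of an odd
vertex are even, also across the wrap-around `n - 1 ~ 0`. -/

open SimpleGraph Finset
open scoped Classical

/-- Layers witnessing a weak dynamic monopoly: every vertex in layer `i ≥ 1`
has at least `τ v` neighbors in layer `i - 1`. -/
def IsWDMLayers {V : Type*} (G : SimpleGraph V) [Fintype V] (τ : V → ℕ) (L : V → ℕ) : Prop :=
  ∀ v : V, 1 ≤ L v →
    τ v ≤ ((G.neighborFinset v).filter (fun u => L u + 1 = L v)).card

/-- `D` is a weak dynamic monopoly of `(G, τ)`. -/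
def IsWDM {V : Type*} (G : SimpleGraph V) [Fintype V] (τ : V → ℕ) (D : Finset V) : Prop :=
  ∃ L : V → ℕ, IsWDMLayers G τ L ∧ ∀ v, v ∈ D ↔ L v = 0

/-- The smallest size of a weak dynamic monopoly. -/
noncomputable def wdyn {V : Type*} (G : SimpleGraph V) [Fintype V] (τ : V → ℕ) : ℕ :=
  sInf {n | ∃ D : Finset V, IsWDM G τ D ∧ D.card = n}

section

variable {V : Type*} [Fintype V] {G : SimpleGraph V} {τ : V → ℕ}

theorem isWDM_univ : IsWDM G τ univ :=
  ⟨fun _ => 0, fun _ hv => by simp at hv, by simp⟩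

theorem wdyn_le {D : Finset V} (hD : IsWDM G τ D) : wdyn G τ ≤ #D :=
  Nat.sInf_le ⟨D, hD, rfl⟩

theorem le_wdyn {k : ℕ} (h : ∀ D, IsWDM G τ D → k ≤ #D) : k ≤ wdyn G τ := by
  obtain ⟨D, hD, hcard⟩ := Nat.sInf_mem (⟨_, univ, isWDM_univ, rfl⟩ :
    {n | ∃ D : Finset V, IsWDM G τ D ∧ #D = n}.Nonempty)
  rw [wdyn, ← hcard]
  exact h D hD

theorem IsWDMLayers.succ_eq_of_adj {L : V → ℕ} (hL : IsWDMLayers G τ L) {v u : V}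
    [Fintype (G.neighborSet v)] (hτ : G.degree v ≤ τ v) (hv : 1 ≤ L v) (huv : G.Adj v u) :
    L u + 1 = L v := by
  obtain rfl := Subsingleton.elim ‹Fintype (G.neighborSet v)› (Subtype.fintype _)
  have hfull : (G.neighborFinset v).filter (fun u => L u + 1 = L v) = G.neighborFinset v :=
    eq_of_subset_of_card_le (filter_subset _ _)
      ((card_neighborFinset_eq_degree G v).trans_le (hτ.trans (hL v hv)))
  have hu := (G.mem_neighborFinset v u).mpr huv
  rw [← hfull] at hu
  exact (mem_filter.mp hu).2

theorem IsWDM.isIndepSet_compl [DecidableEq V] [∀ v, Fintype (G.neighborSet v)] {D : Finset V}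
    (hD : IsWDM G τ D) (hτ : ∀ v, G.degree v ≤ τ v) :
    G.IsIndepSet (↑Dᶜ : Set V) := by
  obtain ⟨L, hL, hLD⟩ := hD
  intro u hu v hv _ huv
  have hu' : 1 ≤ L u := Nat.one_le_iff_ne_zero.mpr (by simpa [hLD] using hu)
  have hv' : 1 ≤ L v := Nat.one_le_iff_ne_zero.mpr (by simpa [hLD] using hv)
  have := hL.succ_eq_of_adj (hτ u) hu' huv
  have := hL.succ_eq_of_adj (hτ v) hv' huv.symm
  omega

end

theorem two_mul_card_le_of_isIndepSet_cycleGraph {n : ℕ} {s : Finset (Fin (n + 2))}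
    (hs : (cycleGraph (n + 2)).IsIndepSet s) : 2 * #s ≤ n + 2 := by
  have hshift : s.image (· + 1) ⊆ sᶜ := by
    intro w hw
    obtain ⟨v, hv, rfl⟩ := mem_image.mp hw
    refine mem_compl.mpr fun hv1 => hs hv hv1 (by simp) ?_
    exact cycleGraph_adj.mpr (Or.inr (add_sub_cancel_left v 1))
  have := card_le_card hshift
  rw [card_image_of_injective _ (add_left_injective 1), card_compl, Fintype.card_fin] at this
  omega

theorem degree_cycleGraph {n : ℕ} (v : Fin (n + 3))
    [Fintype ((cycleGraph (n + 3)).neighborSet v)] : (cycleGraph (n + 3)).degree v = 2 := by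
  convert cycleGraph_degree_three_le

theorem card_filter_val_mod_two_eq_zero (n : ℕ) : #{v : Fin n | v.val % 2 = 0} = (n + 1) / 2 := by
  have := Nat.count_modEq_card n two_pos 0
  rw [Nat.count_eq_card_filter_range, ← Nat.Iio_eq_range, ← Fin.map_valEmbedding_univ,
    filter_map, card_map] at this
  simp only [Nat.ModEq, Nat.zero_mod, Function.comp_def, Fin.valEmbedding_apply] at this
  split_ifs at this <;> omega

theorem isWDMLayers_cycleGraph_val_mod_two (n : ℕ) :
    IsWDMLayers (cycleGraph (n + 3)) (fun _ => 2) (fun v => v.val % 2) := by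
  intro v (hv : 1 ≤ v.val % 2)
  have hodd : v.val % 2 = 1 := by omega
  have hneighbors_even : ∀ u, (cycleGraph (n + 3)).Adj v u → u.val % 2 = 0 := by
    intro u huv
    rcases cycleGraph_adj.mp huv with h | h
    · obtain rfl : u = v - 1 := by rw [← h, sub_sub_cancel]
      rw [Fin.coe_sub_one]
      split_ifs with hv0
      · simp [hv0] at hodd
      · omega
    · obtain rfl : u = v + 1 := by rw [← h, add_sub_cancel]
      rw [Fin.val_add_one]
      split_ifs
      · rfl
      · omega
  beta_reduce
  rw [filter_true_of_mem fun u hu => ?_, card_neighborFinset_eq_degree, degree_cycleGraph]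
  rw [mem_neighborFinset] at hu
  rw [hneighbors_even u hu, hodd]

theorem isWDM_cycleGraph_even (n : ℕ) :
    IsWDM (cycleGraph (n + 3)) (fun _ => 2) {v | v.val % 2 = 0} :=
  ⟨_, isWDMLayers_cycleGraph_val_mod_two n, fun v => by simp⟩

/-- For the cycle `C_n` (n ≥ 3) with the strict majority threshold 2 on every
vertex, the minimum size of a weak dynamic monopoly is ⌈n/2⌉. -/
theorem wdyn_cycleGraph (n : ℕ) (hn : 3 ≤ n) :
    wdyn (SimpleGraph.cycleGraph n) (fun _ => 2) = (n + 1) / 2 := by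
  obtain ⟨m, rfl⟩ := Nat.exists_eq_add_of_le' hn
  refine le_antisymm ?_ (le_wdyn fun D hD => ?_)
  · exact (wdyn_le (isWDM_cycleGraph_even m)).trans (card_filter_val_mod_two_eq_zero _).le
  · have hindep := hD.isIndepSet_compl fun v => (degree_cycleGraph v).le
    have := two_mul_card_le_of_isIndepSet_cycleGraph hindep
    rw [card_compl, Fintype.card_fin] at this
    omega
end

section
/- Let G_n = K₁ ∨ C_n (the wheel: a vertex u joined to all vertices of a cycle C_n) with thresholds τ(v) = ⌈deg(v)/2⌉ for all v. Then the minimum size of a dynamic monopoly of G_n is 2, while every weak dynamic monopoly of G_n has size at least n/4; in particular wdyn(G_n) = Ω(n) while dyn(G_n) = O(1). -/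
open SimpleGraph Finset
open scoped Classical

/-- Layers witnessing a dynamic monopoly. -/
def IsDynLayers {V : Type*} (G : SimpleGraph V) [Fintype V] (τ : V → ℕ) (L : V → ℕ) : Prop :=
  ∀ v : V, 1 ≤ L v →
    τ v ≤ ((G.neighborFinset v).filter (fun u => L u < L v)).card

/-- `D` is a dynamic monopoly of `(G, τ)`. -/
def IsDyn {V : Type*} (G : SimpleGraph V) [Fintype V] (τ : V → ℕ) (D : Finset V) : Prop :=
  ∃ L : V → ℕ, IsDynLayers G τ L ∧ ∀ v, v ∈ D ↔ L v = 0

noncomputable def dyn {V : Type*} (G : SimpleGraph V) [Fintype V] (τ : V → ℕ) : ℕ :=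
  sInf {n | ∃ D : Finset V, IsDyn G τ D ∧ D.card = n}

/-- The wheel `K₁ ∨ C_n`: a hub `none` joined to every vertex of the cycle `C_n`. -/
def wheel (n : ℕ) : SimpleGraph (Option (Fin n)) where
  Adj x y := x ≠ y ∧ (x = none ∨ y = none ∨
    ∃ i j, x = some i ∧ y = some j ∧ (SimpleGraph.cycleGraph n).Adj i j)
  symm := by
    constructor
    rintro x y ⟨hne, h⟩
    refine ⟨hne.symm, ?_⟩
    rcases h with h | h | ⟨i, j, hi, hj, hadj⟩
    · exact Or.inr (Or.inl h)
    · exact Or.inl h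
    · exact Or.inr (Or.inr ⟨j, i, hj, hi, hadj.symm⟩)
  loopless := by constructor; rintro x ⟨hne, -⟩; exact hne rfl

/-- The thresholds ⌈deg(v)/2⌉ on the wheel: the hub has degree n, each
cycle vertex degree 3. -/
def wheelThreshold (n : ℕ) : Option (Fin n) → ℕ
  | none => (n + 1) / 2
  | some _ => 2

/-!
A vertex of the earliest nonzero layer of a dynamic monopoly `D` has all its earlier neighbours
in `D`, so `|D|` is at least some threshold, and every threshold of the wheel is at least `2`;
conversely, from the hub and one cycle vertex the cycle is activated going round it in order.

In a weak dynamic monopoly whose hub sits in layer `h`, an activated cycle vertex needs both of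
its cycle neighbours in the layer just below its own unless it lies in layer `h + 1`, where it
still needs one of them. Chasing these constraints along four consecutive activated cycle vertices
leads to a contradiction, so every four consecutive cycle vertices meet `D`, whence `n ≤ 4 |D|`.
-/

open scoped Pointwise

theorem Finset.two_of_three_of_two_le_card_filter {α : Type*} [DecidableEq α] {a b c : α}
    {P : α → Prop} [DecidablePred P] (h : 2 ≤ (({a, b, c} : Finset α).filter P).card) :
    (P a ∧ P b) ∨ (P a ∧ P c) ∨ (P b ∧ P c) := by
  obtain ⟨x, hx, y, hy, hxy⟩ := Finset.one_lt_card.mp h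
  simp only [mem_filter, mem_insert, mem_singleton] at hx hy
  rcases hx with ⟨rfl | rfl | rfl, hx⟩ <;> rcases hy with ⟨rfl | rfl | rfl, hy⟩ <;> tauto

theorem card_le_card_mul_card_of_forall_exists_add_mem {A : Type*} [AddGroup A] [Fintype A]
    [DecidableEq A] {S Z : Finset A} (h : ∀ a, ∃ s ∈ S, a + s ∈ Z) :
    Fintype.card A ≤ Z.card * S.card :=
  calc Fintype.card A = (univ : Finset A).card := card_univ.symm
    _ ≤ (Z - S).card := card_le_card fun a _ => by
      obtain ⟨s, hs, ha⟩ := h a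
      simpa using sub_mem_sub ha hs
    _ ≤ Z.card * S.card := card_sub_le

section Monopoly

variable {V : Type*} {G : SimpleGraph V} [Fintype V] {τ : V → ℕ} {D : Finset V}

theorem IsDyn.exists_notMem_threshold_le_card (h : IsDyn G τ D) (hD : D ≠ univ) :
    ∃ v ∉ D, τ v ≤ D.card := by
  obtain ⟨L, hL, hmem⟩ := h
  obtain ⟨v, hv, hmin⟩ := (univ \ D).exists_min_image L (by simpa [sdiff_nonempty] using hD)
  have hvD : v ∉ D := by simpa using hv
  refine ⟨v, hvD, (hL v ?_).trans (card_le_card fun u hu => ?_)⟩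
  · rw [hmem] at hvD
    omega
  · rw [mem_filter] at hu
    rw [hmem]
    by_contra hu0
    have := hmin u (by simp [hmem, hu0])
    omega

theorem IsDyn.le_card {k : ℕ} (h : IsDyn G τ D) (hτ : ∀ v, k ≤ τ v) (hk : k ≤ Fintype.card V) :
    k ≤ D.card := by
  by_cases hD : D = univ
  · simpa [hD] using hk
  · obtain ⟨v, -, hv⟩ := h.exists_notMem_threshold_le_card hD
    exact (hτ v).trans hv

end Monopoly

theorem wheel_adj_some_some {n : ℕ} {i j : Fin n} :
    (wheel n).Adj (some i) (some j) ↔ (cycleGraph n).Adj i j := by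
  simpa [wheel] using fun h : (cycleGraph n).Adj i j => h.ne

theorem wheel_neighborFinset_some {m : ℕ} (i : Fin (m + 2)) :
    (wheel (m + 2)).neighborFinset (some i) = {none, some (i - 1), some (i + 1)} := by
  ext (_ | j) <;> rw [mem_neighborFinset]
  · simp [wheel]
  · rw [wheel_adj_some_some, ← mem_neighborFinset, cycleGraph_neighborFinset]
    simp

theorem two_le_wheelThreshold {n : ℕ} (hn : 3 ≤ n) (v : Option (Fin n)) :
    2 ≤ wheelThreshold n v := by
  cases v <;> simp only [wheelThreshold] <;> omega

theorem IsWDMLayers.wheel_two_in_previous_layer {m : ℕ} {L : Option (Fin (m + 2)) → ℕ}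
    (hL : IsWDMLayers (wheel (m + 2)) (wheelThreshold (m + 2)) L) {i : Fin (m + 2)}
    (hi : L (some i) ≠ 0) :
    (L none + 1 = L (some i) ∧ L (some (i - 1)) + 1 = L (some i)) ∨
    (L none + 1 = L (some i) ∧ L (some (i + 1)) + 1 = L (some i)) ∨
    (L (some (i - 1)) + 1 = L (some i) ∧ L (some (i + 1)) + 1 = L (some i)) := by
  have h := hL (some i) (Nat.one_le_iff_ne_zero.mpr hi)
  rw [wheel_neighborFinset_some] at h
  exact two_of_three_of_two_le_card_filter h

theorem IsWDMLayers.wheel_exists_add_eq_zero {m : ℕ} {L : Option (Fin (m + 2)) → ℕ}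
    (hL : IsWDMLayers (wheel (m + 2)) (wheelThreshold (m + 2)) L) (i : Fin (m + 2)) :
    ∃ s ∈ ({0, 1, 2, 3} : Finset (Fin (m + 2))), L (some (i + s)) = 0 := by
  by_contra! h
  simp only [mem_insert, mem_singleton, forall_eq_or_imp, forall_eq, add_zero] at h
  obtain ⟨h0, h1, h2, h3⟩ := h
  have e1 : i + 1 - 1 = i := by grind
  have e2 : i + 1 + 1 = i + 2 := by grind
  have e3 : i + 2 - 1 = i + 1 := by grind
  have e4 : i + 2 + 1 = i + 3 := by grind
  have e5 : i + 3 - 1 = i + 2 := by grind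
  have hw0 := hL.wheel_two_in_previous_layer h0
  have hw1 := hL.wheel_two_in_previous_layer h1
  have hw2 := hL.wheel_two_in_previous_layer h2
  have hw3 := hL.wheel_two_in_previous_layer h3
  simp only [e1, e2, e3, e4, e5] at *
  omega

theorem wheel_isDyn_hub_zero (m : ℕ) :
    IsDyn (wheel (m + 2)) (wheelThreshold (m + 2)) {none, some 0} := by
  refine ⟨fun v => v.elim 0 Fin.val, fun v hv => ?_, fun v => ?_⟩
  · obtain _ | k := v
    · simp at hv
    have hk : k - 1 < k := Fin.sub_one_lt_iff.mpr hv
    calc wheelThreshold (m + 2) (some k) = ({none, some (k - 1)} : Finset _).card :=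
          (card_pair (by simp)).symm
      _ ≤ _ := by
        rw [wheel_neighborFinset_some]
        refine card_le_card fun u hu => mem_filter.2 ?_
        simp only [mem_insert, mem_singleton] at hu
        rcases hu with rfl | rfl
        · exact ⟨by simp, hv⟩
        · exact ⟨by simp, hk⟩
  · obtain _ | k := v
    · simp
    · simp only [mem_insert, mem_singleton, reduceCtorEq, false_or, Option.some.injEq,
        Option.elim_some]
      exact Fin.ext_iff

theorem IsWDM.wheel_le_card_mul_four {m : ℕ} {D : Finset (Option (Fin (m + 2)))}
    (hD : IsWDM (wheel (m + 2)) (wheelThreshold (m + 2)) D) : m + 2 ≤ D.card * 4 := by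
  obtain ⟨L, hL, hmem⟩ := hD
  set Z := univ.filter fun i => L (some i) = 0
  calc m + 2 = Fintype.card (Fin (m + 2)) := (Fintype.card_fin _).symm
    _ ≤ Z.card * ({0, 1, 2, 3} : Finset (Fin (m + 2))).card :=
      card_le_card_mul_card_of_forall_exists_add_mem fun i => by
        simpa [Z] using hL.wheel_exists_add_eq_zero i
    _ ≤ D.card * 4 := Nat.mul_le_mul
      (card_le_card_of_injOn some (fun i hi => (hmem _).2 (mem_filter.1 hi).2)
        (Option.some_injective _).injOn) card_le_four

/-- On `G_n = K₁ ∨ C_n` with thresholds ⌈deg(v)/2⌉ the minimum size of a dynamic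
monopoly is 2, while every weak dynamic monopoly has size at least n/4. -/
theorem wheel_dyn_small_wdyn_large (n : ℕ) (hn : 3 ≤ n) :
    dyn (wheel n) (wheelThreshold n) = 2 ∧
    ∀ D : Finset (Option (Fin n)), IsWDM (wheel n) (wheelThreshold n) D →
      (n : ℝ) / 4 ≤ D.card := by
  obtain ⟨m, rfl⟩ : ∃ m, n = m + 2 := ⟨n - 2, by omega⟩
  have hpair := wheel_isDyn_hub_zero m
  refine ⟨le_antisymm (Nat.sInf_le ⟨_, hpair, card_pair (by simp)⟩) ?_, fun D hD => ?_⟩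
  · refine le_csInf ⟨_, _, hpair, rfl⟩ ?_
    rintro _ ⟨D, hD, rfl⟩
    exact hD.le_card (two_le_wheelThreshold hn) (by simp)
  · rw [div_le_iff₀ four_pos]
    exact_mod_cast hD.wheel_le_card_mul_four
end

section
/- Let m ≥ 1 and let G be the graph formed by m disjoint triangles together with a central vertex v adjacent to exactly one vertex of each triangle, with strict majority thresholds. Then the minimum size of a weak dynamic monopoly of G equals 2m = ⌊2|V(G)|/3⌋. -/
open SimpleGraph Finset
open scoped Classical

/-- `m` disjoint triangles plus a central vertex `none` joined to the vertex
`(i, 0)` of each triangle `i`. -/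
def spokeTriangles (m : ℕ) : SimpleGraph (Option (Fin m × Fin 3)) where
  Adj x y := x ≠ y ∧
    ((∃ i a b, x = some (i, a) ∧ y = some (i, b)) ∨
     (x = none ∧ ∃ i, y = some (i, 0)) ∨
     (y = none ∧ ∃ i, x = some (i, 0)))
  symm := by
    constructor
    rintro x y ⟨hne, h⟩
    refine ⟨hne.symm, ?_⟩
    rcases h with ⟨i, a, b, hx, hy⟩ | h | h
    · exact Or.inl ⟨i, b, a, hy, hx⟩
    · exact Or.inr (Or.inr ⟨h.1, h.2⟩)
    · exact Or.inr (Or.inl ⟨h.1, h.2⟩)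
  loopless := by constructor; rintro x ⟨hne, -⟩; exact hne rfl

/-!
A vertex of degree 2 has threshold 2, so once outside layer 0 it needs both neighbours exactly one
layer below it. In a triangle `(i,0),(i,1),(i,2)` the two degree-2 vertices therefore cannot both
leave layer 0, and if one of them does, the other two vertices share a layer below it, which must be
layer 0. So every triangle meets the monopoly in at least two vertices. Conversely, the `2m`
degree-2 vertices activate every `(i,0)` (threshold 2) in the first round, and these activate the
centre (threshold `⌈(m+1)/2⌉ ≤ m`) in the second.
-/

namespace IsWDMLayers

variable {V : Type*} {G : SimpleGraph V} [Fintype V] {τ L : V → ℕ}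

theorem add_one_eq_of_adj (hL : IsWDMLayers G τ L) {v u : V} (hv : 1 ≤ L v)
    (hτ : G.degree v ≤ τ v) (hvu : G.Adj v u) : L u + 1 = L v := by
  have hall : (G.neighborFinset v).filter (fun u => L u + 1 = L v) = G.neighborFinset v :=
    eq_of_subset_of_card_le (filter_subset _ _)
      (by rw [card_neighborFinset_eq_degree]; exact hτ.trans (hL v hv))
  exact filter_eq_self.1 hall u ((mem_neighborFinset G v u).2 hvu)

theorem two_eq_zero_of_triangle (hL : IsWDMLayers G τ L) {a b c : V} (hab : G.Adj a b)
    (hac : G.Adj a c) (hbc : G.Adj b c) (hb : G.degree b ≤ τ b) (hc : G.degree c ≤ τ c) :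
    L a = 0 ∧ L b = 0 ∨ L a = 0 ∧ L c = 0 ∨ L b = 0 ∧ L c = 0 := by
  rcases Nat.eq_zero_or_pos (L b) with hLb | hLb <;>
    rcases Nat.eq_zero_or_pos (L c) with hLc | hLc
  · omega
  · have := hL.add_one_eq_of_adj hLc hc hac.symm
    have := hL.add_one_eq_of_adj hLc hc hbc.symm
    omega
  · have := hL.add_one_eq_of_adj hLb hb hab.symm
    have := hL.add_one_eq_of_adj hLb hb hbc
    omega
  · have := hL.add_one_eq_of_adj hLb hb hbc
    have := hL.add_one_eq_of_adj hLc hc hbc.symm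
    omega

theorem isWDM (hL : IsWDMLayers G τ L) : IsWDM G τ (univ.filter (L · = 0)) :=
  ⟨L, hL, by simp⟩

end IsWDMLayers

theorem wdyn_eq_of_isWDM {V : Type*} {G : SimpleGraph V} [Fintype V] {τ : V → ℕ}
    {D : Finset V} {n : ℕ} (hD : IsWDM G τ D) (hcard : #D = n)
    (hmin : ∀ D', IsWDM G τ D' → n ≤ #D') : wdyn G τ = n :=
  le_antisymm (Nat.sInf_le ⟨D, hD, hcard⟩)
    (le_csInf ⟨n, D, hD, hcard⟩ (by rintro _ ⟨D', hD', rfl⟩; exact hmin D' hD'))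

section spokeTriangles

variable {m : ℕ}

theorem spokeTriangles_adj_some_some {i j : Fin m} {a b : Fin 3} :
    (spokeTriangles m).Adj (some (i, a)) (some (j, b)) ↔ i = j ∧ a ≠ b := by
  simp only [spokeTriangles, ne_eq, Option.some.injEq, Prod.mk.injEq, reduceCtorEq,
    false_and, or_false]
  constructor
  · rintro ⟨hne, i', a', b', ⟨rfl, rfl⟩, rfl, rfl⟩
    exact ⟨rfl, fun h => hne ⟨rfl, h⟩⟩
  · rintro ⟨rfl, hne⟩
    exact ⟨fun h => hne h.2, i, a, b, ⟨rfl, rfl⟩, rfl, rfl⟩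

theorem spokeTriangles_adj_none_some {i : Fin m} {a : Fin 3} :
    (spokeTriangles m).Adj none (some (i, a)) ↔ a = 0 := by
  simp [spokeTriangles]

theorem spokeTriangles_adj_some_none {i : Fin m} {a : Fin 3} :
    (spokeTriangles m).Adj (some (i, a)) none ↔ a = 0 := by
  rw [adj_comm, spokeTriangles_adj_none_some]

theorem spokeTriangles_degree_none : (spokeTriangles m).degree none = m := by
  have : (spokeTriangles m).neighborFinset none = univ.image (fun i => some (i, 0)) := by
    ext (_ | ⟨j, b⟩) <;> simp [spokeTriangles_adj_none_some, eq_comm]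
  rw [← card_neighborFinset_eq_degree, this,
    card_image_of_injective _ (fun i j h => by simpa using h), card_univ, Fintype.card_fin]

theorem spokeTriangles_degree_some_zero (i : Fin m) :
    (spokeTriangles m).degree (some (i, 0)) = 3 := by
  have : (spokeTriangles m).neighborFinset (some (i, 0)) =
      insert none ((univ.erase 0).image (fun b => some (i, b))) := by
    ext (_ | ⟨j, b⟩) <;>
      simp [spokeTriangles_adj_some_some, spokeTriangles_adj_some_none, eq_comm, and_comm]
  rw [← card_neighborFinset_eq_degree, this, card_insert_of_notMem (by simp),
    card_image_of_injective _ (fun b c h => by simpa using h), card_erase_of_mem (mem_univ _),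
    card_univ, Fintype.card_fin]

theorem spokeTriangles_degree_some_of_ne_zero (i : Fin m) {a : Fin 3} (ha : a ≠ 0) :
    (spokeTriangles m).degree (some (i, a)) = 2 := by
  have : (spokeTriangles m).neighborFinset (some (i, a)) =
      (univ.erase a).image (fun b => some (i, b)) := by
    ext (_ | ⟨j, b⟩) <;>
      simp [spokeTriangles_adj_some_some, spokeTriangles_adj_some_none, eq_comm, ha, and_comm]
  rw [← card_neighborFinset_eq_degree, this,
    card_image_of_injective _ (fun b c h => by simpa using h), card_erase_of_mem (mem_univ _),
    card_univ, Fintype.card_fin]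

theorem spokeTriangles_two_layers_eq_zero {L : Option (Fin m × Fin 3) → ℕ}
    (hL : IsWDMLayers (spokeTriangles m) (fun v => ((spokeTriangles m).degree v + 2) / 2) L)
    (i : Fin m) :
    L (some (i, 0)) = 0 ∧ L (some (i, 1)) = 0 ∨ L (some (i, 0)) = 0 ∧ L (some (i, 2)) = 0 ∨
      L (some (i, 1)) = 0 ∧ L (some (i, 2)) = 0 := by
  have hdeg {a : Fin 3} (ha : a ≠ 0) : (spokeTriangles m).degree (some (i, a)) ≤
      ((spokeTriangles m).degree (some (i, a)) + 2) / 2 := by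
    rw [spokeTriangles_degree_some_of_ne_zero i ha]
  exact hL.two_eq_zero_of_triangle (spokeTriangles_adj_some_some.2 ⟨rfl, by decide⟩)
    (spokeTriangles_adj_some_some.2 ⟨rfl, by decide⟩)
    (spokeTriangles_adj_some_some.2 ⟨rfl, by decide⟩) (hdeg (by decide)) (hdeg (by decide))

theorem spokeTriangles_two_mul_le_card {D : Finset (Option (Fin m × Fin 3))}
    (hD : IsWDM (spokeTriangles m) (fun v => ((spokeTriangles m).degree v + 2) / 2) D) :
    2 * m ≤ #D := by
  obtain ⟨L, hL, hDL⟩ := hD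
  have hD : D = univ.filter (L · = 0) := by ext v; simp [hDL]
  have htriangle (i : Fin m) : 2 ≤ ∑ a : Fin 3, if L (some (i, a)) = 0 then 1 else 0 := by
    have := spokeTriangles_two_layers_eq_zero hL i
    rw [Fin.sum_univ_three]
    split_ifs <;> omega
  calc 2 * m = ∑ _i : Fin m, 2 := by simp [mul_comm]
    _ ≤ ∑ i : Fin m, ∑ a : Fin 3, if L (some (i, a)) = 0 then 1 else 0 :=
      sum_le_sum fun i _ => htriangle i
    _ ≤ ∑ v, if L v = 0 then 1 else 0 := by
      rw [Fintype.sum_option, ← Fintype.sum_prod_type']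
      exact Nat.le_add_left _ _
    _ = #D := by rw [hD, card_filter]

def spokeTrianglesLayer (m : ℕ) : Option (Fin m × Fin 3) → ℕ
  | none => 2
  | some (_, a) => if a = 0 then 1 else 0

theorem spokeTriangles_isWDMLayers_spokeTrianglesLayer (hm : 1 ≤ m) :
    IsWDMLayers (spokeTriangles m) (fun v => ((spokeTriangles m).degree v + 2) / 2)
      (spokeTrianglesLayer m) := by
  rintro (_ | ⟨i, a⟩) hv <;> dsimp only
  · have hall : ((spokeTriangles m).neighborFinset none).filter
        (fun u => spokeTrianglesLayer m u + 1 = spokeTrianglesLayer m none) =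
        (spokeTriangles m).neighborFinset none := by
      refine filter_true_of_mem fun u hu => ?_
      rcases u with _ | ⟨j, b⟩
      · exact absurd ((mem_neighborFinset _ _ _).1 hu) (spokeTriangles m).irrefl
      · rw [mem_neighborFinset, spokeTriangles_adj_none_some] at hu
        simp [spokeTrianglesLayer, hu]
    rw [hall, card_neighborFinset_eq_degree, spokeTriangles_degree_none]
    omega
  · by_cases ha : a = 0
    · subst ha
      have hsub : {some (i, 1), some (i, 2)} ⊆
          ((spokeTriangles m).neighborFinset (some (i, 0))).filter
            (fun u => spokeTrianglesLayer m u + 1 = spokeTrianglesLayer m (some (i, 0))) := by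
        simp [insert_subset_iff, spokeTriangles_adj_some_some, spokeTrianglesLayer]
      refine le_trans ?_ (card_le_card hsub)
      rw [spokeTriangles_degree_some_zero, card_pair (by simp)]
    · simp [spokeTrianglesLayer, ha] at hv

theorem spokeTriangles_card_spokeTrianglesLayer_eq_zero :
    #(univ.filter (spokeTrianglesLayer m · = 0)) = 2 * m := by
  rw [card_filter, Fintype.sum_option, Fintype.sum_prod_type]
  simp [spokeTrianglesLayer, Fin.sum_univ_three, mul_comm]

end spokeTriangles

/-- For the graph of `m ≥ 1` triangles attached to a central vertex, with strict
majority thresholds ⌈(deg(v)+1)/2⌉, the minimum size of a weak dynamic monopoly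
equals `2m = ⌊2|V(G)|/3⌋`. -/
theorem wdyn_spokeTriangles (m : ℕ) (hm : 1 ≤ m) :
    wdyn (spokeTriangles m)
      (fun v => ((spokeTriangles m).degree v + 2) / 2) = 2 * m :=
  wdyn_eq_of_isWDM (spokeTriangles_isWDMLayers_spokeTrianglesLayer hm).isWDM
    spokeTriangles_card_spokeTrianglesLayer_eq_zero fun _ => spokeTriangles_two_mul_le_card
end

section
/- Let G be a graph on n vertices with maximum degree Δ(G) ≤ 2r+1, and let τ be a threshold assignment with τ(v) ≥ r+1 for every vertex v. If D is any τ-weak dynamic monopoly of G with processing time t, then n / (2r+2 − (2r+1)(r/(r+1))^t) ≤ |D|. -/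
open SimpleGraph Finset
open scoped Classical

/-!
Let `nᵢ` be the number of vertices of layer `i`. Count the edges between layers `i` and `i + 1`
from both ends: each vertex of layer `i + 1` has at least `r + 1` of them, while a vertex of
layer `i ≥ 1` already has `r + 1` edges back to layer `i - 1` and so at most `r` of its
`≤ 2r + 1` edges go forward. Hence `(r + 1) n₁ ≤ (2r + 1) n₀` and `(r + 1) nᵢ₊₂ ≤ r nᵢ₊₁`,
and summing the resulting geometric bound over the `t + 1` layers gives
`n ≤ n₀ (2r + 2 - (2r + 1) (r / (r + 1)) ^ t)`.
-/

theorem SimpleGraph.sum_card_neighborFinset_inter_comm {V : Type*} (G : SimpleGraph V)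
    [Fintype V] (s t : Finset V) :
    ∑ v ∈ s, #(G.neighborFinset v ∩ t) = ∑ u ∈ t, #(G.neighborFinset u ∩ s) := by
  convert sum_card_bipartiteAbove_eq_sum_card_bipartiteBelow G.Adj (s := s) (t := t) using 3 <;>
    ext <;> simp [bipartiteAbove, bipartiteBelow, adj_comm, and_comm]

theorem sum_range_le_of_mul_succ_le {a : ℕ → ℝ} {r : ℝ} (hr : 0 ≤ r)
    (h₀ : (r + 1) * a 1 ≤ (2 * r + 1) * a 0)
    (hstep : ∀ i, (r + 1) * a (i + 2) ≤ r * a (i + 1)) (t : ℕ) :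
    ∑ i ∈ range (t + 1), a i ≤ a 0 * (2 * r + 2 - (2 * r + 1) * (r / (r + 1)) ^ t) := by
  set q := r / (r + 1)
  have hr1 : 0 < r + 1 := by linarith
  have hq0 : 0 ≤ q := by positivity
  have hqt : q ^ t ≤ 1 := pow_le_one₀ hq0 ((div_le_one hr1).2 (by linarith))
  have hdecay : ∀ i, a (i + 1) ≤ q ^ i * a 1 := fun i =>
    le_geom (u := fun i => a (i + 1)) hq0 i fun k _ => by
      rw [div_mul_eq_mul_div, le_div_iff₀ hr1]
      linarith [hstep k]
  have hgeom : ∑ i ∈ range t, q ^ i = (r + 1) * (1 - q ^ t) := by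
    have hq : 1 - q = 1 / (r + 1) := by simp only [q]; field_simp; ring
    rw [← mul_neg_geom_sum, hq]
    field_simp
  calc ∑ i ∈ range (t + 1), a i = ∑ i ∈ range t, a (i + 1) + a 0 := sum_range_succ' _ _
    _ ≤ ∑ i ∈ range t, q ^ i * a 1 + a 0 := by
      gcongr with i; exact hdecay i
    _ = (r + 1) * a 1 * (1 - q ^ t) + a 0 := by rw [← sum_mul, hgeom]; ring
    _ ≤ (2 * r + 1) * a 0 * (1 - q ^ t) + a 0 := by gcongr
    _ = a 0 * (2 * r + 2 - (2 * r + 1) * q ^ t) := by ring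

def layer {V : Type*} [Fintype V] (L : V → ℕ) (i : ℕ) : Finset V :=
  univ.filter fun v => L v = i

theorem card_eq_sum_card_layer {V : Type*} [Fintype V] {L : V → ℕ} {t : ℕ}
    (ht : ∀ v, L v ≤ t) : Fintype.card V = ∑ i ∈ range (t + 1), #(layer L i) :=
  card_eq_sum_card_fiberwise fun v _ => mem_range.2 (Nat.lt_succ_of_le (ht v))

namespace IsWDMLayers

variable {V : Type*} [Fintype V] {G : SimpleGraph V} {τ L : V → ℕ} {k d : ℕ}

theorem le_card_neighborFinset_inter_layer (hL : IsWDMLayers G τ L) {v : V} {i : ℕ}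
    (hv : L v = i + 1) : τ v ≤ #(G.neighborFinset v ∩ layer L i) := by
  convert hL v (by omega) using 2
  ext u
  simp [layer, hv]

theorem card_neighborFinset_inter_layer_add_le_degree (hL : IsWDMLayers G τ L) {u : V} {i : ℕ}
    (hu : L u = i + 1) : #(G.neighborFinset u ∩ layer L (i + 2)) + τ u ≤ G.degree u := by
  have hdisj : Disjoint (G.neighborFinset u ∩ layer L (i + 2)) (G.neighborFinset u ∩ layer L i) :=
    disjoint_left.2 fun w hw₁ hw₂ => by
      simp only [layer, mem_inter, mem_filter] at hw₁ hw₂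
      omega
  calc #(G.neighborFinset u ∩ layer L (i + 2)) + τ u
      ≤ #(G.neighborFinset u ∩ layer L (i + 2)) + #(G.neighborFinset u ∩ layer L i) := by
        gcongr; exact hL.le_card_neighborFinset_inter_layer hu
    _ = #((G.neighborFinset u ∩ layer L (i + 2)) ∪ (G.neighborFinset u ∩ layer L i)) :=
        (card_union_of_disjoint hdisj).symm
    _ ≤ #(G.neighborFinset u) := card_le_card (union_subset inter_subset_left inter_subset_left)
    _ = G.degree u := G.card_neighborFinset_eq_degree u

theorem mul_card_layer_succ_le_sum (hL : IsWDMLayers G τ L) (hτ : ∀ v, k ≤ τ v) (i : ℕ) :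
    k * #(layer L (i + 1)) ≤ ∑ u ∈ layer L i, #(G.neighborFinset u ∩ layer L (i + 1)) := by
  rw [← G.sum_card_neighborFinset_inter_comm, mul_comm, ← smul_eq_mul, ← sum_const]
  refine sum_le_sum fun v hv => (hτ v).trans (hL.le_card_neighborFinset_inter_layer ?_)
  simpa [layer] using hv

theorem mul_card_layer_one_le (hL : IsWDMLayers G τ L) (hτ : ∀ v, k ≤ τ v)
    (hdeg : ∀ v, G.degree v ≤ d) : k * #(layer L 1) ≤ d * #(layer L 0) := by
  refine (hL.mul_card_layer_succ_le_sum hτ 0).trans ?_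
  rw [mul_comm, ← smul_eq_mul, ← sum_const]
  refine sum_le_sum fun u _ => ?_
  calc #(G.neighborFinset u ∩ layer L 1) ≤ #(G.neighborFinset u) := card_le_card inter_subset_left
    _ = G.degree u := G.card_neighborFinset_eq_degree u
    _ ≤ d := hdeg u

theorem mul_card_layer_add_two_le (hL : IsWDMLayers G τ L) (hτ : ∀ v, k ≤ τ v)
    (hdeg : ∀ v, G.degree v ≤ d) (i : ℕ) :
    k * #(layer L (i + 2)) ≤ (d - k) * #(layer L (i + 1)) := by
  refine (hL.mul_card_layer_succ_le_sum hτ (i + 1)).trans ?_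
  rw [mul_comm, ← smul_eq_mul, ← sum_const]
  refine sum_le_sum fun u hu => ?_
  show #(G.neighborFinset u ∩ layer L (i + 2)) ≤ d - k
  have hu : L u = i + 1 := by simpa [layer] using hu
  have hsplit := hL.card_neighborFinset_inter_layer_add_le_degree hu
  have hdeg_u := hdeg u
  have hτ_u := hτ u
  omega

end IsWDMLayers

theorem wdm_size_lower_bound_odd_degree_general {V : Type*} (G : SimpleGraph V) [Fintype V]
    (τ : V → ℕ) (r t : ℕ)
    (hdeg : ∀ v, G.degree v ≤ 2 * r + 1)
    (hτ : ∀ v, r + 1 ≤ τ v)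
    (L : V → ℕ) (hL : IsWDMLayers G τ L) (ht : ∀ v, L v ≤ t) :
    (Fintype.card V : ℝ) / (2 * r + 2 - (2 * r + 1) * ((r : ℝ) / (r + 1)) ^ t) ≤
      (Finset.univ.filter (fun v => L v = 0)).card := by
  have h₀ : ((r : ℝ) + 1) * #(layer L 1) ≤ (2 * r + 1) * #(layer L 0) := by
    exact_mod_cast hL.mul_card_layer_one_le hτ hdeg
  have hstep : ∀ i, ((r : ℝ) + 1) * #(layer L (i + 2)) ≤ r * #(layer L (i + 1)) := fun i => by
    have := hL.mul_card_layer_add_two_le hτ hdeg i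
    rw [show 2 * r + 1 - (r + 1) = r by omega] at this
    exact_mod_cast this
  have hq : ((r : ℝ) / (r + 1)) ^ t ≤ 1 :=
    pow_le_one₀ (by positivity) ((div_le_one (by positivity)).2 (by linarith))
  rw [div_le_iff₀ (by nlinarith), card_eq_sum_card_layer ht]
  push_cast
  exact sum_range_le_of_mul_succ_le (a := fun i => (#(layer L i) : ℝ)) (by positivity) h₀ hstep t

/-- Lower bound for the size of a weak dynamic monopoly with processing time `t`
in a graph with maximum degree at most `2r+1` and thresholds at least `r+1`. -/
theorem wdm_size_lower_bound_odd_degree {V : Type*} (G : SimpleGraph V) [Fintype V]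
    (τ : V → ℕ) (r t : ℕ) (hr : 1 ≤ r)
    (hdeg : ∀ v, G.degree v ≤ 2 * r + 1)
    (hτ : ∀ v, r + 1 ≤ τ v)
    (L : V → ℕ) (hL : IsWDMLayers G τ L) (ht : ∀ v, L v ≤ t) :
    (Fintype.card V : ℝ) / (2 * r + 2 - (2 * r + 1) * ((r : ℝ) / (r + 1)) ^ t) ≤
      (Finset.univ.filter (fun v => L v = 0)).card :=
  wdm_size_lower_bound_odd_degree_general G τ r t hdeg hτ L hL ht
end

section
/- Let G be a graph with maximum degree Δ(G) ≤ 2r+1 and thresholds τ(v) ≥ r+1 for all v, and let D partition V(G) as D₀=D, D₁, …, D_t witnessing a weak dynamic monopoly. Then |D_{i+1}| ≤ (r/(r+1))|D_i| for every 1 ≤ i ≤ t−1, and |D₁| ≤ ((2r+1)/(r+1))|D₀|. -/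
open SimpleGraph Finset
open scoped Classical

/-!
Double count the edges between consecutive layers `D_i` and `D_{i+1}`. Each vertex of
`D_{i+1}` sends at least `τ v ≥ r + 1` of them back to `D_i`. A vertex of `D₀` sends at most
its degree `2r + 1` forward, while a vertex of `D_i` with `i ≥ 1` already spends
`τ v ≥ r + 1` of its at most `2r + 1` edges on `D_{i-1}`, so it sends at most `r` forward.
-/

namespace SimpleGraph

variable {V : Type*} [Fintype V] (G : SimpleGraph V)

lemma card_neighborFinset_inter_add_card_neighborFinset_inter_le_degree {s t : Finset V}
    (hst : Disjoint s t) (v : V) :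
    #(G.neighborFinset v ∩ s) + #(G.neighborFinset v ∩ t) ≤ G.degree v := by
  rw [← card_union_of_disjoint (hst.mono inter_subset_right inter_subset_right),
    ← inter_union_distrib_left, ← card_neighborFinset_eq_degree]
  exact card_le_card inter_subset_left

lemma card_mul_le_card_mul_of_neighborFinset_inter {s t : Finset V} {m n : ℕ}
    (hm : ∀ v ∈ t, m ≤ #(G.neighborFinset v ∩ s))
    (hn : ∀ u ∈ s, #(G.neighborFinset u ∩ t) ≤ n) :
    #t * m ≤ #s * n := by
  refine card_mul_le_card_mul G.Adj (fun v hv => ?_) (fun u hu => ?_)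
  · convert hm v hv using 2
    ext u
    simp [bipartiteAbove, and_comm]
  · convert hn u hu using 2
    ext w
    simp [bipartiteBelow, G.adj_comm, and_comm]

end SimpleGraph

abbrev wdmLayer {V : Type*} [Fintype V] (L : V → ℕ) (i : ℕ) : Finset V :=
  univ.filter (fun v => L v = i)

namespace IsWDMLayers

variable {V : Type*} [Fintype V] {G : SimpleGraph V} {τ L : V → ℕ}

lemma le_card_neighborFinset_inter_wdmLayer (hL : IsWDMLayers G τ L) {v : V} {i : ℕ}
    (hv : L v = i + 1) : τ v ≤ #(G.neighborFinset v ∩ wdmLayer L i) := by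
  have hprev : (G.neighborFinset v).filter (fun u => L u + 1 = L v) =
      G.neighborFinset v ∩ wdmLayer L i := by
    ext u
    simp [hv]
  exact hprev ▸ hL v (by omega)

lemma card_wdmLayer_succ_mul_le (hL : IsWDMLayers G τ L) {m n i : ℕ} (hτ : ∀ v, m ≤ τ v)
    (hn : ∀ u ∈ wdmLayer L i, #(G.neighborFinset u ∩ wdmLayer L (i + 1)) ≤ n) :
    #(wdmLayer L (i + 1)) * m ≤ #(wdmLayer L i) * n :=
  G.card_mul_le_card_mul_of_neighborFinset_inter
    (fun v hv => (hτ v).trans (hL.le_card_neighborFinset_inter_wdmLayer (mem_filter.mp hv).2)) hn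

lemma card_neighborFinset_inter_wdmLayer_succ_add_le_degree (hL : IsWDMLayers G τ L) {u : V}
    {i : ℕ} (hu : L u = i + 1) :
    #(G.neighborFinset u ∩ wdmLayer L (i + 1 + 1)) + τ u ≤ G.degree u := by
  have hdisj : Disjoint (wdmLayer L (i + 1 + 1)) (wdmLayer L i) :=
    disjoint_filter.mpr fun w _ h₁ h₂ => by omega
  have := G.card_neighborFinset_inter_add_card_neighborFinset_inter_le_degree hdisj u
  have := hL.le_card_neighborFinset_inter_wdmLayer hu
  omega

end IsWDMLayers

lemma Nat.cast_le_div_mul_of_mul_le {K : Type*} [Field K] [LinearOrder K] [IsStrictOrderedRing K]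
    {a b m n : ℕ} (hm : 0 < m) (h : a * m ≤ b * n) : (a : K) ≤ n / m * b := by
  rw [div_mul_eq_mul_div, le_div_iff₀ (by exact_mod_cast hm), mul_comm (n : K)]
  exact_mod_cast h

theorem wdm_layer_cardinality_bounds_general {V : Type*} (G : SimpleGraph V) [Fintype V]
    (τ : V → ℕ) (r t : ℕ)
    (hdeg : ∀ v, G.degree v ≤ 2 * r + 1)
    (hτ : ∀ v, r + 1 ≤ τ v)
    (L : V → ℕ) (hL : IsWDMLayers G τ L) :
    (∀ i, 1 ≤ i → i + 1 ≤ t →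
      ((Finset.univ.filter (fun v => L v = i + 1)).card : ℝ) ≤
        (r : ℝ) / (r + 1) * (Finset.univ.filter (fun v => L v = i)).card) ∧
    ((Finset.univ.filter (fun v => L v = 1)).card : ℝ) ≤
      (2 * r + 1 : ℝ) / (r + 1) * (Finset.univ.filter (fun v => L v = 0)).card := by
  constructor
  · rintro i hi -
    obtain ⟨j, rfl⟩ : ∃ j, i = j + 1 := ⟨i - 1, by omega⟩
    have hforward :
        ∀ u ∈ wdmLayer L (j + 1), #(G.neighborFinset u ∩ wdmLayer L (j + 1 + 1)) ≤ r :=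
      fun u hu => by
        have := hL.card_neighborFinset_inter_wdmLayer_succ_add_le_degree (mem_filter.mp hu).2
        linarith [hdeg u, hτ u]
    exact_mod_cast Nat.cast_le_div_mul_of_mul_le (Nat.succ_pos r)
      (hL.card_wdmLayer_succ_mul_le hτ hforward)
  · have hforward :
        ∀ u ∈ wdmLayer L 0, #(G.neighborFinset u ∩ wdmLayer L (0 + 1)) ≤ 2 * r + 1 :=
      fun u _ => (card_le_card inter_subset_left).trans
        ((G.card_neighborFinset_eq_degree u).trans_le (hdeg u))
    exact_mod_cast Nat.cast_le_div_mul_of_mul_le (Nat.succ_pos r)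
      (hL.card_wdmLayer_succ_mul_le hτ hforward)

/-- Successive layer cardinality bounds for a weak dynamic monopoly in a graph
with maximum degree at most `2r+1` and thresholds at least `r+1`:
`|D_{i+1}| ≤ (r/(r+1))|D_i|` for `1 ≤ i ≤ t-1`, and `|D₁| ≤ ((2r+1)/(r+1))|D₀|`. -/
theorem wdm_layer_cardinality_bounds {V : Type*} (G : SimpleGraph V) [Fintype V]
    (τ : V → ℕ) (r t : ℕ) (hr : 1 ≤ r)
    (hdeg : ∀ v, G.degree v ≤ 2 * r + 1)
    (hτ : ∀ v, r + 1 ≤ τ v)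
    (L : V → ℕ) (hL : IsWDMLayers G τ L) (ht : ∀ v, L v ≤ t) :
    (∀ i, 1 ≤ i → i + 1 ≤ t →
      ((Finset.univ.filter (fun v => L v = i + 1)).card : ℝ) ≤
        (r : ℝ) / (r + 1) * (Finset.univ.filter (fun v => L v = i)).card) ∧
    ((Finset.univ.filter (fun v => L v = 1)).card : ℝ) ≤
      (2 * r + 1 : ℝ) / (r + 1) * (Finset.univ.filter (fun v => L v = 0)).card :=
  wdm_layer_cardinality_bounds_general G τ r t hdeg hτ L hL
end

section
/- Let G be a graph with a threshold assignment τ where τ(v) ≥ k ≥ 1 for every vertex v, and let D₀ be a weak dynamic monopoly with witnessing partition D₀, D₁, …, D_t. Then for every i with 0 ≤ i ≤ t−1 and every set of k distinct vertices u₁,…,u_k ∈ D_i, there exist k internally disjoint paths of length i, each starting in D₀, ending at u₁,…,u_k respectively, and containing exactly one vertex from each D_j for 0 ≤ j ≤ i. -/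
open SimpleGraph Finset
open scoped Classical

/-! Induction on the layer: each of `k` vertices of layer `n + 1` has at least `k` neighbours in
layer `n`, so by Hall's theorem they have distinct representatives among these neighbours, and the
disjoint paths to the representatives extend by one edge. -/

theorem Finset.exists_injective_mem_of_card_le {ι α : Type*} [Fintype ι] [DecidableEq α]
    (T : ι → Finset α) (hT : ∀ j, Fintype.card ι ≤ (T j).card) :
    ∃ w : ι → α, Function.Injective w ∧ ∀ j, w j ∈ T j := by
  refine (all_card_le_biUnion_card_iff_exists_injective T).mp fun s => ?_
  obtain rfl | ⟨j, hj⟩ := s.eq_empty_or_nonempty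
  · simp
  calc s.card ≤ Fintype.card ι := card_le_univ s
    _ ≤ (T j).card := hT j
    _ ≤ (s.biUnion T).card := card_le_card (subset_biUnion_of_mem T hj)

section Layers

variable {V : Type*} {G : SimpleGraph V} [Fintype V] {τ L : V → ℕ}

theorem IsWDMLayers.exists_injective_adj_of_layer_succ (hL : IsWDMLayers G τ L) {k n : ℕ}
    {u : Fin k → V} (hτ : ∀ j, k ≤ τ (u j)) (hu : ∀ j, L (u j) = n + 1) :
    ∃ w : Fin k → V, Function.Injective w ∧ (∀ j, L (w j) = n) ∧ ∀ j, G.Adj (w j) (u j) := by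
  let T j := (G.neighborFinset (u j)).filter fun v => L v + 1 = L (u j)
  have hT : ∀ j, Fintype.card (Fin k) ≤ (T j).card := fun j => by
    simpa using (hτ j).trans (hL (u j) (by rw [hu j]; omega))
  obtain ⟨w, hw_inj, hw_mem⟩ := exists_injective_mem_of_card_le T hT
  refine ⟨w, hw_inj, fun j => ?_, fun j => ?_⟩
  · have := (mem_filter.mp (hw_mem j)).2
    rw [hu j] at this
    omega
  · exact ((G.mem_neighborFinset _ _).mp (mem_filter.mp (hw_mem j)).1).symm

end Layers

def IsLayeredPathFamily {V ι : Type*} (G : SimpleGraph V) (L : V → ℕ) (i : ℕ) (u : ι → V)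
    (f : ι → ℕ → V) : Prop :=
  (∀ j, ∀ s ≤ i, L (f j s) = s) ∧
  (∀ j, ∀ s < i, G.Adj (f j s) (f j (s + 1))) ∧
  (∀ j, f j i = u j) ∧
  (∀ j j', ∀ s ≤ i, ∀ s' ≤ i, f j s = f j' s' → j = j')

namespace IsLayeredPathFamily

variable {V ι : Type*} {G : SimpleGraph V} {L : V → ℕ} {u : ι → V}

theorem const (hu_inj : Function.Injective u) (hu : ∀ j, L (u j) = 0) :
    IsLayeredPathFamily G L 0 u fun j _ => u j := by
  refine ⟨fun j s hs => ?_, fun j s hs => absurd hs s.not_lt_zero, fun j => rfl,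
    fun j j' s _ s' _ h => hu_inj h⟩
  rw [Nat.le_zero.mp hs]
  exact hu j

/-- Since the layers of the vertices on a path are distinct, two paths can only meet in a common
layer, where the new top vertices are distinct by injectivity of `u`. -/
theorem snoc {n : ℕ} {w : ι → V} {f : ι → ℕ → V} (hf : IsLayeredPathFamily G L n w f)
    (hadj : ∀ j, G.Adj (w j) (u j)) (hu_inj : Function.Injective u) (hu : ∀ j, L (u j) = n + 1) :
    IsLayeredPathFamily G L (n + 1) u fun j s => if s = n + 1 then u j else f j s := by
  obtain ⟨hf_layer, hf_adj, hf_end, hf_disj⟩ := hf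
  have layer : ∀ j, ∀ s ≤ n + 1, L (if s = n + 1 then u j else f j s) = s := by
    intro j s hs
    split_ifs with h
    · rw [h, hu]
    · exact hf_layer j s (by omega)
  refine ⟨layer, fun j s hs => ?_, fun j => if_pos rfl, fun j j' s hs s' hs' h => ?_⟩
  · rcases Nat.lt_succ_iff_lt_or_eq.mp hs with hs | rfl
    · simpa [(hs.trans n.lt_succ_self).ne, hs.ne] using hf_adj j s hs
    · simpa [hf_end] using hadj j
  · simp only at h
    obtain rfl : s = s' := by rw [← layer j s hs, ← layer j' s' hs', h]
    split_ifs at h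
    · exact hu_inj h
    · exact hf_disj j j' s (by omega) s (by omega) h

end IsLayeredPathFamily

theorem wdm_disjoint_paths_general {V : Type*} (G : SimpleGraph V) [Fintype V]
    (τ : V → ℕ) (k : ℕ) (hτ : ∀ v, k ≤ τ v)
    (L : V → ℕ) (hL : IsWDMLayers G τ L)
    (i : ℕ)
    (u : Fin k → V) (hu_inj : Function.Injective u) (hu : ∀ j, L (u j) = i) :
    ∃ f : Fin k → ℕ → V,
      (∀ j, ∀ s ≤ i, L (f j s) = s) ∧
      (∀ j, ∀ s < i, G.Adj (f j s) (f j (s + 1))) ∧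
      (∀ j, f j i = u j) ∧
      (∀ j j' : Fin k, ∀ s ≤ i, ∀ s' ≤ i, f j s = f j' s' → j = j') := by
  induction i generalizing u with
  | zero => exact ⟨_, IsLayeredPathFamily.const hu_inj hu⟩
  | succ n ih =>
    obtain ⟨w, hw_inj, hw, hadj⟩ := hL.exists_injective_adj_of_layer_succ (fun j => hτ (u j)) hu
    obtain ⟨f, hf⟩ := ih w hw_inj hw
    exact ⟨_, IsLayeredPathFamily.snoc hf hadj hu_inj hu⟩

/-- In a weak dynamic monopoly partition with all thresholds at least `k`, any
`k` distinct vertices of layer `i` (`i ≤ t-1`) are the endpoints of `k`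
pairwise disjoint paths of length `i` starting in layer 0 and meeting each layer
`0, …, i` in exactly one vertex. -/
theorem wdm_disjoint_paths {V : Type*} (G : SimpleGraph V) [Fintype V]
    (τ : V → ℕ) (k t : ℕ) (hk : 1 ≤ k) (hτ : ∀ v, k ≤ τ v)
    (L : V → ℕ) (hL : IsWDMLayers G τ L) (ht : ∀ v, L v ≤ t)
    (i : ℕ) (hi : i ≤ t - 1)
    (u : Fin k → V) (hu_inj : Function.Injective u) (hu : ∀ j, L (u j) = i) :
    ∃ f : Fin k → ℕ → V,
      (∀ j, ∀ s ≤ i, L (f j s) = s) ∧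
      (∀ j, ∀ s < i, G.Adj (f j s) (f j (s + 1))) ∧
      (∀ j, f j i = u j) ∧
      (∀ j j' : Fin k, ∀ s ≤ i, ∀ s' ≤ i, f j s = f j' s' → j = j') :=
  wdm_disjoint_paths_general G τ k hτ L hL i u hu_inj hu
end

section
/- Let G be a graph with thresholds τ(v) ≥ k for all v, and let D be a weak dynamic monopoly with processing time t. Then t ≤ 2α'(G)/k + 2, where α'(G) is the maximum size of a matching in G. -/
open SimpleGraph Finset
open scoped Classical

/-- The matching number α'(G): the maximum number of independent edges. -/
noncomputable def matchingNumber {V : Type*} (G : SimpleGraph V) [Fintype V] : ℕ :=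
  sSup {n | ∃ M : G.Subgraph, M.IsMatching ∧ M.edgeSet.ncard = n}

/-!
Let `w` be a vertex of the last layer `t`. Since every vertex of layer `m + 1` has at least
`k` neighbours in layer `m`, Hall's theorem gives `k` distinct vertices of layer `m` matched to
any `k` vertices of layer `m + 1`; iterating from `w` down to layer `0` yields `k` vertex-disjoint
paths through the layers `t - 1, …, 0` (a starlike tree with `k` branches). Every other edge of
these paths gives a matching with `k ⌊t / 2⌋` edges, so `k (t - 1) ≤ 2 α'(G)`.
-/

namespace SimpleGraph

variable {V : Type*} {G : SimpleGraph V} [Fintype V]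

lemma ncard_edgeSet_le_matchingNumber {M : G.Subgraph} (hM : M.IsMatching) :
    M.edgeSet.ncard ≤ matchingNumber G :=
  le_csSup ⟨Nat.card (Sym2 V), by rintro _ ⟨N, -, rfl⟩; exact Set.ncard_le_card _⟩ ⟨M, hM, rfl⟩

lemma card_le_matchingNumber_of_pairwise_disjoint {ι : Type*} [Fintype ι] {a b : ι → V}
    (hadj : ∀ i, G.Adj (a i) (b i))
    (hdisj : Pairwise fun i j => Disjoint ({a i, b i} : Set V) {a j, b j}) :
    Fintype.card ι ≤ matchingNumber G := by
  have hmatch : (⨆ i, G.subgraphOfAdj (hadj i)).IsMatching := by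
    refine Subgraph.IsMatching.iSup (fun i => .subgraphOfAdj _) fun i j hij => ?_
    simpa only [(Subgraph.IsMatching.subgraphOfAdj _).support_eq_verts, subgraphOfAdj_verts]
      using hdisj hij
  have hinj : Function.Injective fun i => s(a i, b i) := by
    intro i j hij
    by_contra hne
    have hai : a i ∈ s(a j, b j) := by
      rw [← show s(a i, b i) = s(a j, b j) from hij]
      exact Sym2.mem_mk_left (a i) (b i)
    rw [Sym2.mem_iff] at hai
    exact (hdisj hne).ne_of_mem (by simp) hai rfl
  have hedges : (⨆ i, G.subgraphOfAdj (hadj i)).edgeSet = Set.range fun i => s(a i, b i) := by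
    rw [Subgraph.edgeSet_iSup, Set.range_eq_iUnion]
    simp only [edgeSet_subgraphOfAdj]
  simpa [hedges, Set.ncard_range_of_injective hinj] using
    ncard_edgeSet_le_matchingNumber hmatch

lemma card_mul_div_two_le_matchingNumber {ι : Type*} [Fintype ι] {n : ℕ} (P : ι → ℕ → V)
    (hadj : ∀ i m, m + 1 < n → G.Adj (P i m) (P i (m + 1)))
    (hinj : ∀ i i' m m', m < n → m' < n → P i m = P i' m' → i = i' ∧ m = m') :
    Fintype.card ι * (n / 2) ≤ matchingNumber G := by
  have hdisj : Pairwise fun p q : ι × Fin (n / 2) =>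
      Disjoint ({P p.1 (2 * p.2), P p.1 (2 * p.2 + 1)} : Set V)
        {P q.1 (2 * q.2), P q.1 (2 * q.2 + 1)} := by
    rintro ⟨i, r⟩ ⟨i', r'⟩ hpq
    have hr := r.isLt
    have hr' := r'.isLt
    simp only [Set.disjoint_insert_left, Set.disjoint_insert_right, Set.mem_insert_iff,
      Set.mem_singleton_iff, Set.disjoint_singleton, not_or]
    refine ⟨⟨?_, ?_⟩, ?_, ?_⟩ <;> intro h <;>
      obtain ⟨rfl, h⟩ := hinj _ _ _ _ (by omega) (by omega) h <;> grind
  simpa using card_le_matchingNumber_of_pairwise_disjoint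
    (a := fun p : ι × Fin (n / 2) => P p.1 (2 * p.2)) (fun p => hadj _ _ (by omega)) hdisj

end SimpleGraph

section Layers

variable {V : Type*} {G : SimpleGraph V} [Fintype V] {τ : V → ℕ} {L : V → ℕ} {k : ℕ}

lemma IsWDMLayers.exists_injective_adj_lower (hτ : ∀ v, k ≤ τ v) (hL : IsWDMLayers G τ L)
    {n : ℕ} (x : Fin k → V) (hx : ∀ j, L (x j) = n + 1) :
    ∃ y : Fin k → V, Function.Injective y ∧ ∀ j, G.Adj (x j) (y j) ∧ L (y j) = n := by
  set s : Fin k → Finset V := fun j => (G.neighborFinset (x j)).filter fun u => L u = n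
  have hs : ∀ j, k ≤ (s j).card := fun j => by
    simpa [s, hx j] using (hτ (x j)).trans (hL (x j) (by rw [hx j]; omega))
  -- Each `s j` alone already has at least `k` elements, so Hall's condition is immediate.
  have hall : ∀ A : Finset (Fin k), A.card ≤ (A.biUnion s).card := by
    intro A
    rcases A.eq_empty_or_nonempty with rfl | ⟨j, hj⟩
    · simp
    · calc A.card ≤ k := card_le_univ A |>.trans_eq (Fintype.card_fin k)
        _ ≤ (s j).card := hs j
        _ ≤ (A.biUnion s).card := card_le_card (subset_biUnion_of_mem s hj)
  obtain ⟨y, hy, hys⟩ := (all_card_le_biUnion_card_iff_exists_injective s).1 hall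
  exact ⟨y, hy, fun j => by simpa [s] using hys j⟩

lemma IsWDMLayers.exists_descending_paths (hτ : ∀ v, k ≤ τ v) (hL : IsWDMLayers G τ L) :
    ∀ (n : ℕ) (x : Fin k → V), (∀ j, L (x j) = n) →
      ∃ P : Fin k → ℕ → V, (∀ j, P j n = x j) ∧ (∀ j m, m ≤ n → L (P j m) = m) ∧
        (∀ m < n, Function.Injective fun j => P j m) ∧
        ∀ j m, m < n → G.Adj (P j m) (P j (m + 1))
  | 0, x, _ => ⟨fun j _ => x j, fun _ => rfl, by simp_all, by simp, by simp⟩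
  | n + 1, x, hx => by
    obtain ⟨y, hy, hxy⟩ := hL.exists_injective_adj_lower hτ x hx
    obtain ⟨P, hPn, hPL, hPinj, hPadj⟩ :=
      hL.exists_descending_paths hτ n y fun j => (hxy j).2
    refine ⟨fun j m => if m = n + 1 then x j else P j m, by simp, ?_, ?_, ?_⟩
    · intro j m hm
      dsimp only
      split_ifs with h
      · rw [h, hx]
      · exact hPL j m (by omega)
    · intro m hm
      rcases Nat.lt_succ_iff_lt_or_eq.1 hm with hm | rfl
      · simpa [show m ≠ n + 1 by omega] using hPinj m hm
      · simpa [hPn] using hy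
    · intro j m hm
      rcases Nat.lt_succ_iff_lt_or_eq.1 hm with hm | rfl
      · simpa [show m ≠ n + 1 by omega, show m ≠ n by omega] using hPadj j m hm
      · simpa [hPn] using (hxy j).1.symm

end Layers

theorem wdm_processing_time_le_matching_general {V : Type*} (G : SimpleGraph V) [Fintype V]
    (τ : V → ℕ) (k t : ℕ) (hk : 1 ≤ k) (hτ : ∀ v, k ≤ τ v)
    (L : V → ℕ) (hL : IsWDMLayers G τ L)
    (hproc : ∃ w, L w = t) :
    (t : ℝ) ≤ 2 * matchingNumber G / k + 2 := by
  obtain ⟨w, hw⟩ := hproc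
  obtain ⟨P, -, hPL, hPinj, hPadj⟩ :=
    hL.exists_descending_paths hτ t (fun _ => w) fun _ => hw
  have hmatch : k * (t / 2) ≤ matchingNumber G := by
    simpa using card_mul_div_two_le_matchingNumber P (fun j m hm => hPadj j m (by omega))
      fun j j' m m' hm hm' h => by
        obtain rfl : m = m' := by rw [← hPL j m hm.le, h, hPL j' m' hm'.le]
        exact ⟨hPinj m hm h, rfl⟩
  have hk' : (0 : ℝ) < k := by exact_mod_cast hk
  have hkt : k * t ≤ 2 * matchingNumber G + k :=
    calc k * t ≤ k * (2 * (t / 2) + 1) := Nat.mul_le_mul_left k (by omega)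
      _ = 2 * (k * (t / 2)) + k := by ring
      _ ≤ 2 * matchingNumber G + k := by omega
  rw [div_add' _ _ _ hk'.ne', le_div_iff₀ hk']
  exact_mod_cast (by linarith : t * k ≤ 2 * matchingNumber G + 2 * k)

/-- If all thresholds are at least `k` then the processing time `t` of any weak
dynamic monopoly satisfies `t ≤ 2α'(G)/k + 2`. -/
theorem wdm_processing_time_le_matching {V : Type*} (G : SimpleGraph V) [Fintype V]
    (τ : V → ℕ) (k t : ℕ) (hk : 1 ≤ k) (hτ : ∀ v, k ≤ τ v)
    (L : V → ℕ) (hL : IsWDMLayers G τ L) (ht : ∀ v, L v ≤ t)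
    (hproc : ∃ w, L w = t) :
    (t : ℝ) ≤ 2 * matchingNumber G / k + 2 :=
  wdm_processing_time_le_matching_general G τ k t hk hτ L hL hproc
end

section
/- Let G be a graph with thresholds τ(v) ≥ 2 for all v, let l be the length of a longest path in G, and let D be a weak dynamic monopoly with processing time t. Then t ≤ l/2. -/
open SimpleGraph Finset
open scoped Classical

/-!
Descend from a vertex `w` of the last layer `t`, one layer at a time, to get a path of length `t`
along which `L` strictly decreases. Since `τ ≥ 2`, every vertex of layer `i ≥ 1` has two neighbours
in layer `i - 1`, so a second such descent from `w` can always avoid the (single) vertex of the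
first path in the current layer. The two descents only meet at `w`, so together they form a path
of length `2t`.
-/

namespace IsWDMLayers

variable {V : Type*} {G : SimpleGraph V} [Fintype V] {τ L : V → ℕ}

theorem exists_adj_succ_eq_notMem (hL : IsWDMLayers G τ L) {v : V} (hτv : 2 ≤ τ v)
    (hv : 1 ≤ L v) {S : Set V} (hS : S.InjOn L) :
    ∃ u, G.Adj v u ∧ L u + 1 = L v ∧ u ∉ S := by
  by_contra! hall
  have hle : ((G.neighborFinset v).filter (fun u => L u + 1 = L v)).card ≤ 1 := by
    refine Finset.card_le_one.2 fun a ha b hb => ?_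
    simp only [Finset.mem_filter, mem_neighborFinset] at ha hb
    exact hS (hall a ha.1 ha.2) (hall b hb.1 hb.2) (by omega)
  have := hL v hv
  omega

theorem exists_descending_walk (hL : IsWDMLayers G τ L) (hτ : ∀ v, 2 ≤ τ v) {S : Set V}
    (hS : S.InjOn L) (v : V) (hv : v ∉ S) :
    ∃ (u : V) (p : G.Walk v u), p.length = L v ∧ (p.support.map L).Nodup ∧
      ∀ x ∈ p.support, L x ≤ L v ∧ x ∉ S := by
  induction hk : L v generalizing v with
  | zero => exact ⟨v, .nil, rfl, by simp, by simp [hk, hv]⟩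
  | succ k ih =>
    obtain ⟨u, hadj, hu, huS⟩ := hL.exists_adj_succ_eq_notMem (hτ v) (by omega) hS
    obtain ⟨x, q, hlen, hnodup, hsupp⟩ := ih u huS (by omega)
    refine ⟨x, .cons hadj q, by simp [hlen], ?_, ?_⟩
    · rw [Walk.support_cons, List.map_cons, List.nodup_cons]
      refine ⟨fun hmem => ?_, hnodup⟩
      obtain ⟨y, hy, hyL⟩ := List.mem_map.1 hmem
      have := (hsupp y hy).1
      omega
    · simp only [Walk.support_cons, List.forall_mem_cons]
      exact ⟨⟨hk.le, hv⟩, fun y hy => ⟨(hsupp y hy).1.trans (by omega), (hsupp y hy).2⟩⟩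

theorem exists_isPath_length_eq_two_mul (hL : IsWDMLayers G τ L) (hτ : ∀ v, 2 ≤ τ v) (w : V) :
    ∃ (u v : V) (p : G.Walk u v), p.IsPath ∧ p.length = 2 * L w := by
  rcases Nat.eq_zero_or_pos (L w) with hw | hw
  · exact ⟨w, w, .nil, .nil, by simp [hw]⟩
  obtain ⟨x₁, p₁, hlen₁, hnodup₁, -⟩ :=
    hL.exists_descending_walk hτ (Set.injOn_empty L) w (Set.notMem_empty w)
  have hS : {x | x ∈ p₁.support}.InjOn L := fun _ hx _ hy => List.inj_on_of_nodup_map hnodup₁ hx hy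
  obtain ⟨u, hadj, hu, huS⟩ := hL.exists_adj_succ_eq_notMem (hτ w) hw hS
  obtain ⟨x₂, p₂, hlen₂, hnodup₂, hsupp₂⟩ := hL.exists_descending_walk hτ hS u huS
  refine ⟨x₂, x₁, p₂.reverse.append (.cons hadj.symm p₁), ?_, ?_⟩
  · rw [Walk.isPath_def, Walk.support_append, Walk.support_cons, List.tail_cons,
      Walk.support_reverse, List.nodup_append]
    refine ⟨List.nodup_reverse.2 hnodup₂.of_map, hnodup₁.of_map, fun a ha b hb hab => ?_⟩
    exact (hsupp₂ a (List.mem_reverse.1 ha)).2 (hab ▸ hb)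
  · simp only [Walk.length_append, Walk.length_reverse, Walk.length_cons]
    omega

end IsWDMLayers

theorem wdm_processing_time_le_longest_path_general {V : Type*} (G : SimpleGraph V) [Fintype V]
    (τ : V → ℕ) (t l : ℕ) (hτ : ∀ v, 2 ≤ τ v)
    (hmax : ∀ (u v : V) (p : G.Walk u v), p.IsPath → p.length ≤ l)
    (L : V → ℕ) (hL : IsWDMLayers G τ L)
    (hproc : ∃ w, L w = t) :
    (t : ℝ) ≤ l / 2 := by
  obtain ⟨w, rfl⟩ := hproc
  obtain ⟨u, v, p, hp, hlen⟩ := hL.exists_isPath_length_eq_two_mul hτ w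
  have h : 2 * L w ≤ l := hlen ▸ hmax u v p hp
  rw [le_div_iff₀ two_pos]
  exact_mod_cast (by omega : L w * 2 ≤ l)

/-- If all thresholds are at least 2 and `l` is the length of a longest path of
`G`, then the processing time `t` of any weak dynamic monopoly satisfies
`t ≤ l/2`. -/
theorem wdm_processing_time_le_longest_path {V : Type*} (G : SimpleGraph V) [Fintype V]
    (τ : V → ℕ) (t l : ℕ) (hτ : ∀ v, 2 ≤ τ v)
    (hl : ∃ (u v : V) (p : G.Walk u v), p.IsPath ∧ p.length = l)
    (hmax : ∀ (u v : V) (p : G.Walk u v), p.IsPath → p.length ≤ l)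
    (L : V → ℕ) (hL : IsWDMLayers G τ L) (ht : ∀ v, L v ≤ t)
    (hproc : ∃ w, L w = t) :
    (t : ℝ) ≤ l / 2 :=
  wdm_processing_time_le_longest_path_general G τ t l hτ hmax L hL hproc
end

section
/- Let G be a graph on n vertices with Δ(G) ≤ k, τ any threshold assignment, and D any τ-weak dynamic monopoly with processing time t. Then n ≤ k^{t+1} |D|. -/
open SimpleGraph Finset
open scoped Classical

/-! Every vertex of layer `i + 1` has a neighbour in layer `i`, and a vertex has at most `k`
neighbours, so double counting the edges between consecutive layers gives
`|Dᵢ₊₁| ≤ k |Dᵢ|`, hence `|Dᵢ| ≤ kⁱ |D₀|`. Summing over the layers `0, …, t` and using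
`1 + k + ⋯ + kᵗ < kᵗ⁺¹` for `k ≥ 2` gives the bound. -/

namespace SimpleGraph

variable {V : Type*} (G : SimpleGraph V)

theorem card_le_mul_card_of_forall_exists_adj [G.LocallyFinite] {k : ℕ}
    (hdeg : ∀ v, G.degree v ≤ k) {A B : Finset V} (hB : ∀ v ∈ B, ∃ u ∈ A, G.Adj v u) :
    #B ≤ k * #A := by
  have hAbove : ∀ v ∈ B, 1 ≤ #(A.bipartiteAbove G.Adj v) := fun v hv ↦ by
    obtain ⟨u, hu, hvu⟩ := hB v hv
    exact card_pos.mpr ⟨u, mem_filter.mpr ⟨hu, hvu⟩⟩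
  have hBelow : ∀ u ∈ A, #(B.bipartiteBelow G.Adj u) ≤ k := fun u _ ↦ by
    have hsub : B.bipartiteBelow G.Adj u ⊆ G.neighborFinset u := fun v hv ↦
      (G.mem_neighborFinset u v).mpr (mem_filter.mp hv).2.symm
    exact (card_le_card hsub).trans ((G.card_neighborFinset_eq_degree u).trans_le (hdeg u))
  simpa [mul_comm] using card_mul_le_card_mul G.Adj hAbove hBelow

theorem card_level_le_pow_mul [Fintype V] {k : ℕ} (hdeg : ∀ v, G.degree v ≤ k) {L : V → ℕ}
    (hL : ∀ v, 1 ≤ L v → ∃ u, G.Adj v u ∧ L u + 1 = L v) (i : ℕ) :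
    #{v | L v = i} ≤ k ^ i * #{v | L v = 0} := by
  induction i with
  | zero => simp
  | succ i ih =>
    have hstep : #{v | L v = i + 1} ≤ k * #{v | L v = i} :=
      G.card_le_mul_card_of_forall_exists_adj hdeg fun v hv ↦ by
        have hv : L v = i + 1 := (mem_filter.mp hv).2
        obtain ⟨u, hvu, hu⟩ := hL v (by omega)
        exact ⟨u, mem_filter.mpr ⟨mem_univ u, by omega⟩, hvu⟩
    calc #{v | L v = i + 1} ≤ k * #{v | L v = i} := hstep
      _ ≤ k * (k ^ i * #{v | L v = 0}) := Nat.mul_le_mul_left k ih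
      _ = k ^ (i + 1) * #{v | L v = 0} := by ring

end SimpleGraph

theorem IsWDMLayers.exists_adj_of_one_le {V : Type*} {G : SimpleGraph V} [Fintype V]
    {τ L : V → ℕ} (hL : IsWDMLayers G τ L) (hτ : ∀ v, 1 ≤ τ v) (v : V) (hv : 1 ≤ L v) :
    ∃ u, G.Adj v u ∧ L u + 1 = L v := by
  obtain ⟨u, hu⟩ := card_pos.mp ((hτ v).trans (hL v hv))
  obtain ⟨hvu, hLu⟩ := mem_filter.mp hu
  exact ⟨u, (G.mem_neighborFinset v u).mp hvu, hLu⟩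

/-- In a graph on `n` vertices with maximum degree at most `k`, any weak dynamic
monopoly `D` with processing time `t` satisfies `n ≤ k^(t+1) |D|`. -/
theorem wdm_size_max_degree {V : Type*} (G : SimpleGraph V) [Fintype V]
    (τ : V → ℕ) (k t : ℕ) (hk : 2 ≤ k)
    (hdeg : ∀ v, G.degree v ≤ k) (hτ : ∀ v, 1 ≤ τ v)
    (L : V → ℕ) (hL : IsWDMLayers G τ L) (ht : ∀ v, L v ≤ t) :
    Fintype.card V ≤ k ^ (t + 1) * (Finset.univ.filter (fun v => L v = 0)).card := by
  calc Fintype.card V = ∑ i ∈ range (t + 1), #{v | L v = i} :=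
        card_eq_sum_card_fiberwise fun v _ ↦ mem_range.mpr (Nat.lt_succ_of_le (ht v))
    _ ≤ ∑ i ∈ range (t + 1), k ^ i * #{v | L v = 0} := sum_le_sum fun i _ ↦
        G.card_level_le_pow_mul hdeg (hL.exists_adj_of_one_le hτ) i
    _ = (∑ i ∈ range (t + 1), k ^ i) * #{v | L v = 0} := (sum_mul ..).symm
    _ ≤ k ^ (t + 1) * #{v | L v = 0} := by
        gcongr
        exact (Nat.geomSum_lt hk fun _ ↦ mem_range.mp).le
end

section
/- Let G = C_n □ C_m (Cartesian product of cycles, n,m ≥ 3) with constant threshold 3 on every vertex. Then every weak dynamic monopoly of G has processing time at most 2. -/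
open SimpleGraph Finset
open scoped Classical

/-!
With threshold 3 in a 4-regular graph, a vertex of layer `k ≥ 1` has at most one neighbour
outside layer `k - 1`. Suppose `(a, b)` lies in layer 3 of the torus. Then some `(c, b)` and
some `(a, d)` with `c ~ a`, `d ~ b` lie in layer 2. The neighbour `(a, b)` of `(c, b)` is not in
layer 1, so the corner `(c, d)` is; but its neighbours `(a, d)` and `(c, b)` are both outside
layer 0. As every vertex of layer `k ≥ 1` has a neighbour in layer `k - 1`, a vertex beyond
layer 2 would produce one in layer 3.
-/

theorem SimpleGraph.exists_adj_adj_ne_of_one_lt_degree {V : Type*} (G : SimpleGraph V) {v : V}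
    [Fintype (G.neighborSet v)] (h : 1 < G.degree v) :
    ∃ u w, G.Adj v u ∧ G.Adj v w ∧ u ≠ w := by
  obtain ⟨u, hu, w, hw, hne⟩ := one_lt_card.1 h
  exact ⟨u, w, (G.mem_neighborFinset v u).1 hu, (G.mem_neighborFinset v w).1 hw, hne⟩

namespace IsWDMLayers

section

variable {V : Type*} [Fintype V] {G : SimpleGraph V} {τ L : V → ℕ}

theorem exists_adj_add_one_eq (hL : IsWDMLayers G τ L) {v : V} (hτ : 1 ≤ τ v)
    (hv : 1 ≤ L v) :
    ∃ u, G.Adj v u ∧ L u + 1 = L v := by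
  obtain ⟨u, hu⟩ := card_pos.1 (hτ.trans (hL v hv))
  rw [mem_filter, mem_neighborFinset] at hu
  exact ⟨u, hu⟩

theorem exists_eq_of_le (hL : IsWDMLayers G τ L) (hτ : ∀ v, 1 ≤ τ v) {k : ℕ} {v : V}
    (hv : k ≤ L v) : ∃ w, L w = k := by
  obtain ⟨j, hj⟩ := Nat.exists_eq_add_of_le hv
  induction j generalizing v with
  | zero => exact ⟨v, hj⟩
  | succ j ih =>
    obtain ⟨u, -, hu⟩ := hL.exists_adj_add_one_eq (hτ v) (by omega)
    exact ih (v := u) (by omega) (by omega)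

theorem add_one_eq_or_add_one_eq (hL : IsWDMLayers G τ L) {v u w : V}
    (hdeg : G.degree v ≤ τ v + 1) (hv : 1 ≤ L v) (hu : G.Adj v u) (hw : G.Adj v w)
    (huw : u ≠ w) : L u + 1 = L v ∨ L w + 1 = L v := by
  by_contra! h
  have hsub : (G.neighborFinset v).filter (fun x => L x + 1 = L v) ⊆
      G.neighborFinset v \ {u, w} := by
    intro x hx
    rw [mem_filter] at hx
    rw [mem_sdiff, mem_insert, mem_singleton]
    refine ⟨hx.1, ?_⟩
    rintro (rfl | rfl)
    exacts [h.1 hx.2, h.2 hx.2]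
  have hpair : {u, w} ⊆ G.neighborFinset v := by
    simp [insert_subset_iff, hu, hw]
  have hτ := (hL v hv).trans (card_le_card hsub)
  have h₂ := card_le_card hpair
  rw [card_sdiff_of_subset hpair] at hτ
  rw [card_pair huw, card_neighborFinset_eq_degree] at hτ h₂
  omega

end

section

variable {α β : Type*} [Fintype α] [Fintype β] {G : SimpleGraph α} {H : SimpleGraph β}
  {L : α × β → ℕ}

theorem boxProd_ne_three [G.LocallyFinite] [H.LocallyFinite] (hG : G.IsRegularOfDegree 2)
    (hH : H.IsRegularOfDegree 2)
    (hL : IsWDMLayers (G □ H) (fun _ => 3) L) (x : α × β) : L x ≠ 3 := by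
  intro hx
  obtain ⟨a, b⟩ := x
  have pair {v u w : α × β} (hv : 1 ≤ L v) (hu : (G □ H).Adj v u) (hw : (G □ H).Adj v w)
      (huw : u ≠ w) : L u + 1 = L v ∨ L w + 1 = L v := by
    refine hL.add_one_eq_or_add_one_eq ?_ hv hu hw huw
    rw [degree_boxProd, hG, hH]
  obtain ⟨c, hac, hc⟩ : ∃ c, G.Adj a c ∧ L (c, b) = 2 := by
    obtain ⟨c₁, c₂, h₁, h₂, hne⟩ :=
      G.exists_adj_adj_ne_of_one_lt_degree (by rw [hG a]; norm_num)
    rcases pair (v := (a, b)) (by omega) (boxProd_adj_left.2 h₁) (boxProd_adj_left.2 h₂)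
      (by simpa using hne) with h | h
    exacts [⟨c₁, h₁, by omega⟩, ⟨c₂, h₂, by omega⟩]
  obtain ⟨d, hbd, hd⟩ : ∃ d, H.Adj b d ∧ L (a, d) = 2 := by
    obtain ⟨d₁, d₂, h₁, h₂, hne⟩ :=
      H.exists_adj_adj_ne_of_one_lt_degree (by rw [hH b]; norm_num)
    rcases pair (v := (a, b)) (by omega) (boxProd_adj_right.2 h₁) (boxProd_adj_right.2 h₂)
      (by simpa using hne) with h | h
    exacts [⟨d₁, h₁, by omega⟩, ⟨d₂, h₂, by omega⟩]
  have hcd : L (c, d) = 1 := by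
    rcases pair (v := (c, b)) (by omega) (boxProd_adj_left.2 hac.symm) (boxProd_adj_right.2 hbd)
      (by simp [hac.ne]) with h | h <;> omega
  rcases pair (v := (c, d)) (by omega) (boxProd_adj_left.2 hac.symm)
    (boxProd_adj_right.2 hbd.symm) (by simp [hac.ne]) with h | h <;> omega

end

end IsWDMLayers

theorem cycleGraph_isRegularOfDegree_two {n : ℕ} (hn : 3 ≤ n) :
    (cycleGraph n).IsRegularOfDegree 2 := by
  obtain ⟨k, rfl⟩ := Nat.exists_eq_add_of_le' hn
  exact fun _ => cycleGraph_degree_three_le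

/-- In the Cartesian product of cycles `C_n □ C_m` with constant threshold 3,
every weak dynamic monopoly has processing time at most 2: every vertex lies in
layer 0, 1 or 2. -/
theorem wdm_torus_processing_time_le_two (n m : ℕ) (hn : 3 ≤ n) (hm : 3 ≤ m)
    (L : Fin n × Fin m → ℕ)
    (hL : IsWDMLayers ((SimpleGraph.cycleGraph n).boxProd (SimpleGraph.cycleGraph m))
      (fun _ => 3) L) :
    ∀ v, L v ≤ 2 := by
  intro v
  by_contra! hv
  obtain ⟨w, hw⟩ := hL.exists_eq_of_le (fun _ => by norm_num) hv
  exact hL.boxProd_ne_three (cycleGraph_isRegularOfDegree_two hn)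
    (cycleGraph_isRegularOfDegree_two hm) w hw
end

section
/- For n divisible by 4, the graph C_n □ C_n with constant threshold 3 has a weak dynamic monopoly of size 3n²/8; hence wdyn(C_n □ C_n) ≤ 3n²/8. -/
/-!
Reducing both coordinates mod 4 maps `C_n □ C_n` onto `C_4 □ C_4` (as `4 ∣ n`), and it maps
the neighbourhood of every vertex onto the neighbourhood of its image. Along such a map a
layering of the target pulls back to a layering of the source with the same thresholds,
because each counted neighbour downstairs lifts to a distinct counted neighbour upstairs. On
`C_4 □ C_4` an explicit pattern of layers 0, 1, 2 is a layering with threshold 3 by a finite check. Its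
layer 0 has 6 of the 16 vertices and every fibre of the projection has `(n/4)²` vertices, so
the pulled-back monopoly has `6 (n/4)² = 3n²/8` vertices.
-/

open SimpleGraph Finset
open scoped Classical

theorem Fin.ofNat_val_add {n k : ℕ} [NeZero k] (hk : k ∣ n) (x y : Fin n) :
    Fin.ofNat k (x + y).val = Fin.ofNat k x.val + Fin.ofNat k y.val := by
  ext
  simp [Fin.val_add, Nat.mod_mod_of_dvd _ hk, Nat.add_mod]

theorem Fin.card_filter_ofNat_val_eq {n k : ℕ} [NeZero k] (hk : k ∣ n) (a : Fin k) :
    #{x : Fin n | Fin.ofNat k x.val = a} = n / k := by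
  have hcount := Nat.count_modEq_card n (Nat.pos_of_neZero k) a.val
  rw [Nat.count_eq_card_filter_range, if_neg (by simp [Nat.mod_eq_zero_of_dvd hk]),
    add_zero] at hcount
  rw [← hcount, ← Nat.Iio_eq_range, ← Fin.map_valEmbedding_univ, filter_map, card_map]
  congr 1
  ext x
  simp [Fin.ext_iff, Nat.ModEq, Nat.mod_eq_of_lt a.isLt]

theorem card_filter_comp_eq_mul {α β : Type*} [Fintype α] [Fintype β] [DecidableEq β]
    (f : α → β) {m : ℕ} (hf : ∀ b, #{a | f a = b} = m) (P : β → Prop) [DecidablePred P] :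
    #{a | P (f a)} = #{b | P b} * m := by
  rw [card_eq_sum_card_fiberwise (f := f) (t := {b | P b}) (fun a ha => by simpa using ha),
    ← smul_eq_mul, ← sum_const]
  refine sum_congr rfl fun b hb => ?_
  rw [← hf b, filter_filter]
  congr 1
  ext a
  simp only [mem_filter, mem_univ, true_and, and_iff_right_iff_imp]
  rintro rfl
  simpa using hb

theorem card_filter_prodMap_eq_mul {α β γ δ : Type*} [Fintype α] [Fintype β] [DecidableEq γ]
    [DecidableEq δ] (f : α → γ) (g : β → δ) (p : γ × δ) :
    #{v | Prod.map f g v = p} = #{x | f x = p.1} * #{y | g y = p.2} := by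
  rw [← card_product]
  congr 1
  ext
  simp [Prod.ext_iff]

namespace SimpleGraph

variable {U V W X : Type*}

instance [DecidableEq V] [DecidableEq W] {G : SimpleGraph V} {H : SimpleGraph W}
    [DecidableRel G.Adj] [DecidableRel H.Adj] : DecidableRel (G □ H).Adj :=
  fun _ _ => decidable_of_iff' _ boxProd_adj

def IsLocallySurjective (G : SimpleGraph V) (H : SimpleGraph W) (f : V → W) : Prop :=
  ∀ v w, H.Adj (f v) w → ∃ u, G.Adj v u ∧ f u = w

theorem IsLocallySurjective.boxProd {G : SimpleGraph U} {G' : SimpleGraph V}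
    {H : SimpleGraph W} {H' : SimpleGraph X} {f : U → V} {g : W → X}
    (hf : G.IsLocallySurjective G' f) (hg : H.IsLocallySurjective H' g) :
    (G □ H).IsLocallySurjective (G' □ H') (Prod.map f g) := by
  rintro ⟨a, b⟩ ⟨c, d⟩ h
  rcases boxProd_adj.1 h with ⟨hac, rfl⟩ | ⟨hbd, rfl⟩
  · obtain ⟨u, hu, rfl⟩ := hf a c hac
    exact ⟨(u, b), boxProd_adj.2 (Or.inl ⟨hu, rfl⟩), rfl⟩
  · obtain ⟨u, hu, rfl⟩ := hg b d hbd
    exact ⟨(a, u), boxProd_adj.2 (Or.inr ⟨hu, rfl⟩), rfl⟩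

theorem isLocallySurjective_cycleGraph_ofNat {n k : ℕ} [NeZero k] (hk : k ∣ n) :
    (cycleGraph n).IsLocallySurjective (cycleGraph k) (fun x => Fin.ofNat k x.val) := by
  intro x b hb
  dsimp only at hb ⊢
  obtain ⟨k, rfl⟩ : ∃ k', k = k' + 2 := by
    rcases k with _ | _ | k
    · exact absurd rfl (NeZero.ne 0)
    · exact absurd hb cycleGraph_one_adj
    · exact ⟨k, rfl⟩
  obtain ⟨n, rfl⟩ : ∃ n', n = n' + 2 := ⟨n - 2, by have := Nat.le_of_dvd x.pos hk; omega⟩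
  have hone : Fin.ofNat (k + 2) (1 : Fin (n + 2)).val = 1 := rfl
  rcases cycleGraph_adj.1 hb with h | h
  · refine ⟨x - 1, cycleGraph_adj.2 (Or.inl (sub_sub_cancel x 1)), ?_⟩
    have hx := Fin.ofNat_val_add hk (x - 1) 1
    rw [sub_add_cancel, hone] at hx
    rwa [hx, add_sub_right_comm, add_eq_right, sub_eq_zero] at h
  · refine ⟨x + 1, cycleGraph_adj.2 (Or.inr (add_sub_cancel_left x 1)), ?_⟩
    rw [Fin.ofNat_val_add hk, hone, ← h, add_sub_cancel]

end SimpleGraph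

theorem IsWDMLayers.comp {V W : Type*} [Fintype V] [Fintype W] {G : SimpleGraph V}
    {H : SimpleGraph W} {τ L : W → ℕ} (hL : IsWDMLayers H τ L) {f : V → W}
    (hf : G.IsLocallySurjective H f) : IsWDMLayers G (τ ∘ f) (L ∘ f) := by
  intro v hv
  refine (hL (f v) hv).trans (card_le_card_of_surjOn f ?_)
  intro w hw
  simp only [coe_filter, mem_neighborFinset, Set.mem_ofPred_eq] at hw
  obtain ⟨u, hu, rfl⟩ := hf v w hw.1
  exact ⟨u, by simpa [hu] using hw.2, rfl⟩

/-- Entry `(a, b)` is the layer of the torus vertices `(x, y)` with `x ≡ a`, `y ≡ b (mod 4)`. -/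
def torusPattern (v : Fin 4 × Fin 4) : ℕ :=
  ![![0, 1, 2, 1], ![1, 0, 1, 0], ![2, 1, 0, 1], ![1, 0, 1, 0]] v.1 v.2

theorem isWDMLayers_torusPattern :
    IsWDMLayers (cycleGraph 4 □ cycleGraph 4) (fun _ => 3) torusPattern := by
  unfold IsWDMLayers
  -- `IsWDMLayers` counts neighbours with classical decidability; `decide` needs the computable one.
  convert (by decide +kernel : ∀ v, 1 ≤ torusPattern v →
    3 ≤ #{u ∈ (cycleGraph 4 □ cycleGraph 4).neighborFinset v | torusPattern u + 1 = torusPattern v})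

theorem card_torusPattern_eq_zero : #{p | torusPattern p = 0} = 6 := by decide

theorem wdyn_torus_upper_bound_general (n : ℕ) (h4 : 4 ∣ n) :
    (∃ D : Finset (Fin n × Fin n),
      IsWDM ((SimpleGraph.cycleGraph n).boxProd (SimpleGraph.cycleGraph n))
        (fun _ => 3) D ∧ D.card = 3 * n ^ 2 / 8) ∧
    wdyn ((SimpleGraph.cycleGraph n).boxProd (SimpleGraph.cycleGraph n))
      (fun _ => 3) ≤ 3 * n ^ 2 / 8 := by
  set π : Fin n → Fin 4 := fun x => Fin.ofNat 4 x.val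
  have hπ : (cycleGraph n).IsLocallySurjective (cycleGraph 4) π :=
    isLocallySurjective_cycleGraph_ofNat h4
  have hD : IsWDM (cycleGraph n □ cycleGraph n) (fun _ => 3)
      {v | torusPattern (Prod.map π π v) = 0} :=
    ⟨_, isWDMLayers_torusPattern.comp (hπ.boxProd hπ), fun v => by simp⟩
  have hfiber (p : Fin 4 × Fin 4) : #{v | Prod.map π π v = p} = n / 4 * (n / 4) := by
    rw [card_filter_prodMap_eq_mul, Fin.card_filter_ofNat_val_eq h4,
      Fin.card_filter_ofNat_val_eq h4]
  have hcard : #{v | torusPattern (Prod.map π π v) = 0} = 3 * n ^ 2 / 8 := by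
    rw [card_filter_comp_eq_mul _ hfiber (fun p => torusPattern p = 0), card_torusPattern_eq_zero]
    obtain ⟨m, rfl⟩ := h4
    rw [Nat.mul_div_cancel_left m four_pos, show 3 * (4 * m) ^ 2 = 6 * (m * m) * 8 by ring,
      Nat.mul_div_cancel _ (by norm_num)]
  exact ⟨⟨_, hD, hcard⟩, Nat.sInf_le ⟨_, hD, hcard⟩⟩

/-- For `4 ∣ n`, the torus `C_n □ C_n` with constant threshold 3 has a weak
dynamic monopoly of size `3n²/8`; hence `wdyn(C_n □ C_n) ≤ 3n²/8`. -/
theorem wdyn_torus_upper_bound (n : ℕ) (hn : 3 ≤ n) (h4 : 4 ∣ n) :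
    (∃ D : Finset (Fin n × Fin n),
      IsWDM ((SimpleGraph.cycleGraph n).boxProd (SimpleGraph.cycleGraph n))
        (fun _ => 3) D ∧ D.card = 3 * n ^ 2 / 8) ∧
    wdyn ((SimpleGraph.cycleGraph n).boxProd (SimpleGraph.cycleGraph n))
      (fun _ => 3) ≤ 3 * n ^ 2 / 8 :=
  wdyn_torus_upper_bound_general n h4
end
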